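/- Let k be a field and V = k((t))((u)). For nonzero x ∈ V write exp(x) = (ν(x), ν̄(x)) ∈ ℤ², where ν(x) is the u-adic valuation and ν̄(x) is the t-adic valuation of the leading Laurent coefficient. If a, b ∈ V are nonzero elements such that the vectors exp(a) and exp(b) are linearly independent over ℚ, then a and b are algebraically independent over k. -/

import Mathlib

/-- The two-dimensional local field `k((t))((u))`: Laurent series in `u`
with coefficients Laurent series in `t`. -/
abbrev TwoDimLocalField (k : Type*) [Field k] := LaurentSeries (LaurentSeries k)

variable {k : Type*} [Field k]

/-- `ν(a)`: the `u`-adic valuation. -/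
noncomputable def nu (a : TwoDimLocalField k) : ℤ := a.order

/-- `ν̄(a)`: the `t`-adic valuation of the leading Laurent coefficient. -/
noncomputable def nubar (a : TwoDimLocalField k) : ℤ := (a.coeff a.order).order

/-- The exponent vector `exp(x) = (ν(x), ν̄(x))`, viewed in `ℚ²`. -/
noncomputable def expVec (a : TwoDimLocalField k) : Fin 2 → ℚ := ![(nu a : ℚ), (nubar a : ℚ)]

/-!
The leading exponent `(ν, ν̄)` is additive under multiplication and vanishes on nonzero
constants, so the term `c • a^i b^j` of a polynomial relation has leading exponent
`i • exp a + j • exp b`; when `exp a` and `exp b` are independent, distinct monomials give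
distinct leading exponents. A finite sum of nonzero series with pairwise distinct leading
exponents cannot vanish: among the terms of least `u`-order, the leading `t`-orders are
distinct, so the coefficient at the lexicographically least pair `(ν, ν̄)` survives.
-/

namespace HahnSeries

variable {Γ Γ' R ι : Type*}

section LinearOrder

variable [Zero Γ] [LinearOrder Γ] [Zero Γ'] [LinearOrder Γ']

noncomputable def leadingExp [Zero R] (x : R⟦Γ'⟧⟦Γ⟧) : Γ × Γ' :=
  (x.order, x.leadingCoeff.order)

@[simp]
theorem leadingExp_zero [Zero R] : leadingExp (0 : R⟦Γ'⟧⟦Γ⟧) = 0 := by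
  simp [leadingExp]

variable [AddCommMonoid R]

theorem coeff_sum_eq_sum_filter_order {s : Finset ι} {x : ι → R⟦Γ⟧} {g : Γ}
    (hg : ∀ i ∈ s, g ≤ (x i).order) :
    (∑ i ∈ s, x i).coeff g = ∑ i ∈ s with (x i).order = g, (x i).coeff g := by
  rw [coeff_sum, Finset.sum_filter]
  refine Finset.sum_congr rfl fun i hi => ?_
  split_ifs with h
  · rfl
  · exact coeff_eq_zero_of_lt_order ((hg i hi).lt_of_ne' h)

theorem sum_ne_zero_of_injOn_order {s : Finset ι} (hs : s.Nonempty) {x : ι → R⟦Γ⟧}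
    (hx : ∀ i ∈ s, x i ≠ 0) (hinj : Set.InjOn (fun i => (x i).order) s) :
    ∑ i ∈ s, x i ≠ 0 := by
  obtain ⟨i₀, hi₀, hmin⟩ := s.exists_min_image (fun i => (x i).order) hs
  have hcoeff : (∑ i ∈ s, x i).coeff (x i₀).order = (x i₀).leadingCoeff := by
    rw [coeff_sum_eq_sum_filter_order hmin, leadingCoeff_eq]
    refine Finset.sum_eq_single_of_mem i₀ (by simp [hi₀]) fun j hj hne => ?_
    rw [Finset.mem_filter] at hj
    exact absurd (hinj hj.1 hi₀ hj.2) hne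
  intro h
  rw [h, coeff_zero, eq_comm, leadingCoeff_eq_zero] at hcoeff
  exact hx i₀ hi₀ hcoeff

theorem sum_ne_zero_of_injOn_leadingExp {s : Finset ι} (hs : s.Nonempty)
    {x : ι → R⟦Γ'⟧⟦Γ⟧} (hx : ∀ i ∈ s, x i ≠ 0) (hinj : Set.InjOn (fun i => leadingExp (x i)) s) :
    ∑ i ∈ s, x i ≠ 0 := by
  obtain ⟨i₀, hi₀, hmin⟩ := s.exists_min_image (fun i => (x i).order) hs
  set t := {i ∈ s | (x i).order = (x i₀).order}
  have hleading : ∑ i ∈ t, (x i).leadingCoeff ≠ 0 := by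
    refine sum_ne_zero_of_injOn_order ⟨i₀, by simp [t, hi₀]⟩
      (fun i hi => leadingCoeff_ne_zero.mpr (hx i (Finset.mem_filter.mp hi).1)) ?_
    intro i hi j hj hij
    simp only [t, Finset.coe_filter, Set.mem_ofPred_eq] at hi hj
    exact hinj hi.1 hj.1 (Prod.ext (hi.2.trans hj.2.symm) hij)
  have hcoeff : (∑ i ∈ s, x i).coeff (x i₀).order = ∑ i ∈ t, (x i).leadingCoeff := by
    rw [coeff_sum_eq_sum_filter_order hmin]
    refine Finset.sum_congr rfl fun i hi => ?_
    rw [leadingCoeff_eq, (Finset.mem_filter.mp hi).2]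
  intro h
  rw [h, coeff_zero] at hcoeff
  exact hleading hcoeff.symm

end LinearOrder

@[simp]
theorem leadingExp_one [Zero Γ] [LinearOrder Γ] [AddCommMonoid Γ'] [LinearOrder Γ']
    [IsOrderedCancelAddMonoid Γ'] [Semiring R] : leadingExp (1 : R⟦Γ'⟧⟦Γ⟧) = 0 := by
  rw [leadingExp, order_one, leadingCoeff_one, order_one, Prod.mk_zero_zero]

section Multiplicative

variable [AddCommMonoid Γ] [LinearOrder Γ] [IsOrderedCancelAddMonoid Γ]
  [AddCommMonoid Γ'] [LinearOrder Γ'] [IsOrderedCancelAddMonoid Γ']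

section Semiring

variable [Semiring R]

@[simp]
theorem leadingExp_C_C (r : R) : leadingExp (C (C r) : R⟦Γ'⟧⟦Γ⟧) = 0 := by
  rw [leadingExp, order_C, C_apply, leadingCoeff_of_single, order_C, Prod.mk_zero_zero]

variable [NoZeroDivisors R]

theorem leadingExp_mul {x y : R⟦Γ'⟧⟦Γ⟧} (hx : x ≠ 0) (hy : y ≠ 0) :
    leadingExp (x * y) = leadingExp x + leadingExp y := by
  rw [leadingExp, leadingExp, leadingExp, order_mul hx hy, leadingCoeff_mul,
    order_mul (leadingCoeff_ne_zero.mpr hx) (leadingCoeff_ne_zero.mpr hy), Prod.mk_add_mk]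

theorem leadingExp_pow {x : R⟦Γ'⟧⟦Γ⟧} (hx : x ≠ 0) (n : ℕ) :
    leadingExp (x ^ n) = n • leadingExp x := by
  induction n with
  | zero => rw [pow_zero, leadingExp_one, zero_smul]
  | succ n ih => rw [pow_succ, leadingExp_mul (pow_ne_zero n hx) hx, ih, succ_nsmul]

end Semiring

section CommSemiring

variable [CommSemiring R] [NoZeroDivisors R] [Nontrivial R]

theorem leadingExp_prod {s : Finset ι} {x : ι → R⟦Γ'⟧⟦Γ⟧} (hx : ∀ i ∈ s, x i ≠ 0) :
    leadingExp (∏ i ∈ s, x i) = ∑ i ∈ s, leadingExp (x i) := by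
  classical
  induction s using Finset.induction_on with
  | empty => rw [Finset.prod_empty, Finset.sum_empty, leadingExp_one]
  | insert i s hi ih =>
    have hs : ∀ j ∈ s, x j ≠ 0 := fun j hj => hx j (Finset.mem_insert_of_mem hj)
    rw [Finset.prod_insert hi, Finset.sum_insert hi,
      leadingExp_mul (hx i (Finset.mem_insert_self i s)) (Finset.prod_ne_zero_iff.mpr hs),
      ih hs]

open MvPolynomial

variable {σ : Type*} {x : σ → R⟦Γ'⟧⟦Γ⟧}

theorem aeval_monomial_ne_zero (hx : ∀ i, x i ≠ 0) {d : σ →₀ ℕ} {r : R} (hr : r ≠ 0) :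
    aeval x (monomial d r) ≠ 0 := by
  rw [aeval_monomial]
  exact mul_ne_zero (C_ne_zero (C_ne_zero hr))
    (Finset.prod_ne_zero_iff.mpr fun i _ => pow_ne_zero _ (hx i))

theorem leadingExp_aeval_monomial (hx : ∀ i, x i ≠ 0) (d : σ →₀ ℕ) {r : R} (hr : r ≠ 0) :
    leadingExp (aeval x (monomial d r)) = Finsupp.linearCombination ℕ (leadingExp ∘ x) d := by
  rw [aeval_monomial, algebraMap_apply, ← C_eq_algebraMap, Finsupp.prod,
    leadingExp_mul (C_ne_zero (C_ne_zero hr))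
      (Finset.prod_ne_zero_iff.mpr fun i _ => pow_ne_zero _ (hx i)),
    leadingExp_C_C, zero_add, leadingExp_prod fun i _ => pow_ne_zero _ (hx i),
    Finsupp.linearCombination_apply, Finsupp.sum]
  exact Finset.sum_congr rfl fun i _ => leadingExp_pow (hx i) (d i)

end CommSemiring

open MvPolynomial in
theorem algebraicIndependent_of_linearIndependent_leadingExp [CommRing R] [IsDomain R]
    {σ : Type*} {x : σ → R⟦Γ'⟧⟦Γ⟧} (hx : LinearIndependent ℕ (leadingExp ∘ x)) :
    AlgebraicIndependent R x := by
  have hx0 : ∀ i, x i ≠ 0 := fun i h => hx.ne_zero i (by simp [h])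
  rw [algebraicIndependent_iff]
  intro p hp
  by_contra hp0
  rw [p.as_sum, map_sum] at hp
  refine sum_ne_zero_of_injOn_leadingExp (support_nonempty.mpr hp0)
    (fun d hd => aeval_monomial_ne_zero hx0 (mem_support_iff.mp hd)) ?_ hp
  intro d hd e he hde
  simp only [leadingExp_aeval_monomial hx0 _ (mem_support_iff.mp hd),
    leadingExp_aeval_monomial hx0 _ (mem_support_iff.mp he)] at hde
  exact hx hde

end Multiplicative

theorem algebraMap_powerSeriesAlgebra {S : Type*} [Semiring Γ] [PartialOrder Γ]
    [IsStrictOrderedRing Γ] [CommSemiring R] [CommSemiring S] [Algebra S R] (c : S) :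
    algebraMap S R⟦Γ⟧ c = C (algebraMap S R c) := by
  rw [algebraMap_apply', PowerSeries.algebraMap_apply, ofPowerSeries_C]

end HahnSeries

theorem leadingExp_eq_nu_nubar (a : TwoDimLocalField k) :
    HahnSeries.leadingExp a = (nu a, nubar a) := by
  rw [HahnSeries.leadingExp, HahnSeries.leadingCoeff_eq, nu, nubar]

theorem algebraically_independent_of_exponents_independent_general
    (a b : TwoDimLocalField k)
    (h : LinearIndependent ℚ ![expVec a, expVec b]) :
    AlgebraicIndependent k ![a, b] := by
  -- `k((t))((u))` is a `k`-algebra through `PowerSeries`; its `algebraMap` is still `C ∘ C`.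
  convert HahnSeries.algebraicIndependent_of_linearIndependent_leadingExp
    (R := k) (x := ![a, b]) ?_
  · exact Algebra.algebra_ext _ _ fun c => by
      rw [HahnSeries.algebraMap_powerSeriesAlgebra, HahnSeries.algebraMap_powerSeriesAlgebra]
      rfl
  · let toRat : ℤ × ℤ →+ (Fin 2 → ℚ) := AddMonoidHom.mk' (fun e => ![(e.1 : ℚ), e.2])
      fun e f => by ext i; fin_cases i <;> simp
    have hexp : ![expVec a, expVec b] = toRat ∘ HahnSeries.leadingExp ∘ ![a, b] := by
      ext i : 1
      fin_cases i <;> simp [toRat, expVec, leadingExp_eq_nu_nubar]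
    exact .of_comp toRat.toNatLinearMap (hexp ▸ h.restrict_scalars' ℕ)

/-- If `a, b ∈ k((t))((u))` are nonzero and `exp(a)`, `exp(b)` are linearly
independent over `ℚ`, then `a` and `b` are algebraically independent over `k`. -/
theorem algebraically_independent_of_exponents_independent
    (a b : TwoDimLocalField k) (ha : a ≠ 0) (hb : b ≠ 0)
    (h : LinearIndependent ℚ ![expVec a, expVec b]) :
    AlgebraicIndependent k ![a, b] :=
  algebraically_independent_of_exponents_independent_general a b h
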